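/- For a = ((g₁g₂+1), i(g₁g₂−1), (g₁+g₂), i(g₁−g₂)) with g₁, g₂ holomorphic, one has ‖a‖²‖a'‖² − |ā·a'|² = −4(|g₁'|²(|g₂|²−1)² + |g₂'|²(|g₁|²−1)²). -/

import Mathlib

open Complex

/-- Indefinite Hermitian product a·b̄ on ℂ⁴. -/
noncomputable def hdot (x y : Fin 4 → ℂ) : ℂ :=
  x 0 * star (y 0) + x 1 * star (y 1) - x 2 * star (y 2) - x 3 * star (y 3)

/-- Indefinite Hermitian square ‖a‖² = |a₁|²+|a₂|²−|a₃|²−|a₄|². -/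
noncomputable def nsq (x : Fin 4 → ℂ) : ℝ :=
  Complex.normSq (x 0) + Complex.normSq (x 1) - Complex.normSq (x 2) - Complex.normSq (x 3)

/-- Auxiliary vector a = ((g₁g₂+1), i(g₁g₂−1), (g₁+g₂), i(g₁−g₂)). -/
noncomputable def aV (g₁ g₂ : ℂ → ℂ) (t : ℂ) : Fin 4 → ℂ :=
  ![g₁ t * g₂ t + 1, Complex.I * (g₁ t * g₂ t - 1),
    g₁ t + g₂ t, Complex.I * (g₁ t - g₂ t)]

def aVDeriv (a b a' b' : ℂ) : Fin 4 → ℂ :=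
  ![a' * b + a * b', I * (a' * b + a * b'), a' + b', I * (a' - b')]

theorem hasDerivAt_aV {g₁ g₂ : ℂ → ℂ} {g₁' g₂' t : ℂ} (h₁ : HasDerivAt g₁ g₁' t)
    (h₂ : HasDerivAt g₂ g₂' t) :
    HasDerivAt (aV g₁ g₂) (aVDeriv (g₁ t) (g₂ t) g₁' g₂') t := by
  have hprod := h₁.mul h₂
  rw [hasDerivAt_pi]
  intro k
  fin_cases k
  · exact hprod.add_const 1
  · exact (hprod.sub_const 1).const_mul I
  · exact h₁.add h₂
  · exact (h₁.sub h₂).const_mul I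

theorem nsq_aV_mul_nsq_aVDeriv_sub_normSq_hdot (g₁ g₂ : ℂ → ℂ) (t a' b' : ℂ) :
    nsq (aV g₁ g₂ t) * nsq (aVDeriv (g₁ t) (g₂ t) a' b')
        - normSq (hdot (aVDeriv (g₁ t) (g₂ t) a' b') (aV g₁ g₂ t))
      = -4 * (normSq a' * (normSq (g₂ t) - 1) ^ 2 + normSq b' * (normSq (g₁ t) - 1) ^ 2) := by
  simp only [nsq, hdot, aV, aVDeriv, Matrix.cons_val_zero, Matrix.cons_val_one,
    Matrix.cons_val_two, Matrix.cons_val_three, Matrix.head_cons, Matrix.tail_cons,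
    normSq_apply, add_re, add_im, sub_re, sub_im, mul_re, mul_im, I_re, I_im, one_re, one_im,
    RCLike.star_def, conj_re, conj_im]
  ring

/-- ‖a‖²‖a'‖² − |ā·a'|² = −4(|g₁'|²(|g₂|²−1)² + |g₂'|²(|g₁|²−1)²). -/
theorem stmt12 (D : Set ℂ) (hD : IsOpen D) (g₁ g₂ : ℂ → ℂ)
    (hg₁ : DifferentiableOn ℂ g₁ D) (hg₂ : DifferentiableOn ℂ g₂ D) :
    ∀ t ∈ D,
      nsq (aV g₁ g₂ t) * nsq (fun k => deriv (fun z => aV g₁ g₂ z k) t)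
        - Complex.normSq (hdot (fun k => deriv (fun z => aV g₁ g₂ z k) t) (aV g₁ g₂ t))
      = -4 * (Complex.normSq (deriv g₁ t) * (Complex.normSq (g₂ t) - 1)^2
              + Complex.normSq (deriv g₂ t) * (Complex.normSq (g₁ t) - 1)^2) := by
  intro t ht
  have h₁ := ((hg₁ t ht).differentiableAt (hD.mem_nhds ht)).hasDerivAt
  have h₂ := ((hg₂ t ht).differentiableAt (hD.mem_nhds ht)).hasDerivAt
  have hderiv : (fun k => deriv (fun z => aV g₁ g₂ z k) t)
      = aVDeriv (g₁ t) (g₂ t) (deriv g₁ t) (deriv g₂ t) :=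
    funext fun k => (hasDerivAt_pi.mp (hasDerivAt_aV h₁ h₂) k).deriv
  rw [hderiv]
  exact nsq_aV_mul_nsq_aVDeriv_sub_normSq_hdot g₁ g₂ t _ _
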